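/- arXiv:2211.03249 — 2 statements merged into one kernel-verified Lean document; each statement's English description precedes it below -/
import Mathlib

section
/- The endomorphism σ of K[x,y,z] defined by σ(x) = x - x²z³ - y⁴z - 2xyz - 2y³ - 2xy²z², σ(y) = y + xz² + y²z, σ(z) = z is an automorphism of the polynomial algebra K[x,y,z]. -/
open MvPolynomial

/-- The Nagata map as a `K`-algebra endomorphism of `K[x,y,z]`. -/
noncomputable def nagata (K : Type*) [CommRing K] :
    MvPolynomial (Fin 3) K →ₐ[K] MvPolynomial (Fin 3) K :=
  aeval ![X 0 - (X 0)^2 * (X 2)^3 - (X 1)^4 * X 2 - 2 * X 0 * X 1 * X 2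
            - 2 * (X 1)^3 - 2 * X 0 * (X 1)^2 * (X 2)^2,
          X 1 + X 0 * (X 2)^2 + (X 1)^2 * X 2,
          X 2]

/-- The inverse of the Nagata map, defined via the invariant `w = y² + xz`. -/
noncomputable def nagataInv (K : Type*) [CommRing K] :
    MvPolynomial (Fin 3) K →ₐ[K] MvPolynomial (Fin 3) K :=
  aeval ![X 0 + 2 * X 1 * ((X 1)^2 + X 0 * X 2) - X 2 * ((X 1)^2 + X 0 * X 2)^2,
          X 1 - X 2 * ((X 1)^2 + X 0 * X 2),
          X 2]

theorem nagata_comp_inv (K : Type*) [CommRing K] :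
    (nagata K).comp (nagataInv K) = AlgHom.id K _ := by
  apply MvPolynomial.algHom_ext
  intro i
  fin_cases i <;>
    simp [nagata, nagataInv, map_ofNat] <;> ring

theorem nagata_inv_comp (K : Type*) [CommRing K] :
    (nagataInv K).comp (nagata K) = AlgHom.id K _ := by
  apply MvPolynomial.algHom_ext
  intro i
  fin_cases i <;>
    simp [nagata, nagataInv, map_ofNat] <;> ring

/-- the Nagata endomorphism `σ` of `K[x,y,z]` is an automorphism. -/
theorem nagata_is_automorphism (K : Type*) [Field K] [CharZero K] :
    Function.Bijective (nagata K) := by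
  have h1 : ∀ p, nagataInv K (nagata K p) = p := fun p =>
    AlgHom.congr_fun (nagata_inv_comp K) p
  have h2 : ∀ p, nagata K (nagataInv K p) = p := fun p =>
    AlgHom.congr_fun (nagata_comp_inv K) p
  exact ⟨Function.LeftInverse.injective h1, Function.RightInverse.surjective h2⟩
end

section
/- Let K[u,v] be graded by ℤ/cℤ with deg u = ā, deg v = b̄. If ξ₁ is an elementary graded automorphism and ξ₂ is a linear graded automorphism, then ξ₂∘ξ₁ = ζ₂∘ζ₁∘ζ₀ where ζ₀, ζ₂ are linear graded automorphisms, ζ₁ is an elementary graded automorphism, and ζ₂(u) = λu for some λ ≠ 0. -/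
open MvPolynomial

variable {K : Type*}

/-- Homogeneity for the `ℤ/cℤ`-grading of `K[u,v]` with `deg u = ā, deg v = b̄`. -/
def IsModHom [CommRing K] (a b c : ℕ) (p : MvPolynomial (Fin 2) K) (d : ZMod c) : Prop :=
  ∀ m ∈ p.support, (m 0 : ZMod c) * (a : ZMod c) + (m 1 : ZMod c) * (b : ZMod c) = d

/-- Graded automorphism of `K[u,v]` for this grading. -/
def IsModGraded [CommRing K] (a b c : ℕ)
    (φ : MvPolynomial (Fin 2) K ≃ₐ[K] MvPolynomial (Fin 2) K) : Prop :=
  ∀ (d : ZMod c) (p : MvPolynomial (Fin 2) K), IsModHom a b c p d → IsModHom a b c (φ p) d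

/-- Linear automorphisms: both images of the variables are (standard) homogeneous linear. -/
def IsLinearAut [CommRing K]
    (φ : MvPolynomial (Fin 2) K ≃ₐ[K] MvPolynomial (Fin 2) K) : Prop :=
  (φ (X 0)).IsHomogeneous 1 ∧ (φ (X 1)).IsHomogeneous 1

/-- Elementary automorphisms of `K[u,v]`. -/
def IsElementary [CommRing K]
    (φ : MvPolynomial (Fin 2) K ≃ₐ[K] MvPolynomial (Fin 2) K) : Prop :=
  (∃ (l : K) (_ : l ≠ 0) (F : Polynomial K),
      φ (X 0) = X 0 ∧ φ (X 1) = C l * X 1 + Polynomial.aeval (X 0) F) ∨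
  (∃ (l : K) (_ : l ≠ 0) (F : Polynomial K),
      φ (X 1) = X 1 ∧ φ (X 0) = C l * X 0 + Polynomial.aeval (X 1) F)

/-! Write `ξ₂ u = α u + β v`, `ξ₂ v = γ u + δ v`. If `ξ₁` moves only `v` and `β = 0`, then
`ξ₂ u = α u` already and `ξ₂ ξ₁ = ξ₂ ξ₁ 1` is the factorization. If `ξ₁ : u ↦ l u + F(v)` moves
only `u` and `δ ≠ 0`, then `ξ₂ ξ₁ = ζ₂ ζ₁ ζ₀` with `ζ₀ : u ↦ u + (l β / δ) v`, `ζ₁ : u ↦ u + F(v)`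
and `ζ₂ : u ↦ (l (α δ - β γ) / δ) u, v ↦ γ u + δ v`. In the two remaining cases `β ≠ 0` (when
`δ = 0`, because `ξ₂` is invertible), so gradedness of `ξ₂` forces `ā = b̄`. Then the swap
`σ : u ↔ v` is graded, and writing `ξ₂ ξ₁ = (ξ₂ σ) (σ ξ₁ σ) σ` turns each of them into one of the
two cases above. -/

namespace MvPolynomial

variable {R σ : Type*} [CommSemiring R]

noncomputable def aevalEquiv (f g : σ → MvPolynomial σ R)
    (hgf : ∀ i, aeval g (f i) = X i) (hfg : ∀ i, aeval f (g i) = X i) :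
    MvPolynomial σ R ≃ₐ[R] MvPolynomial σ R :=
  AlgEquiv.ofAlgHom (aeval f) (aeval g) (algHom_ext fun i => by simpa using hfg i)
    (algHom_ext fun i => by simpa using hgf i)

@[simp]
lemma aevalEquiv_X (f g : σ → MvPolynomial σ R) (hgf hfg) (i : σ) :
    aevalEquiv f g hgf hfg (X i) = f i :=
  aeval_X f i

@[simp]
lemma algHomClass_apply_C {F : Type*} [FunLike F (MvPolynomial σ R) (MvPolynomial σ R)]
    [AlgHomClass F R (MvPolynomial σ R) (MvPolynomial σ R)] (φ : F) (r : R) : φ (C r) = C r :=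
  AlgHomClass.commutes φ r

lemma algEquiv_ext {e₁ e₂ : MvPolynomial σ R ≃ₐ[R] MvPolynomial σ R}
    (h : ∀ i, e₁ (X i) = e₂ (X i)) : e₁ = e₂ :=
  AlgEquiv.coe_toAlgHom_injective (algHom_ext h)

end MvPolynomial

section LinearForms

variable [CommRing K]

@[simp]
lemma coeff_linear_X_zero (α β : K) :
    coeff (Finsupp.single 0 1) (C α * X 0 + C β * X 1 : MvPolynomial (Fin 2) K) = α := by
  simp [coeff_X, Finsupp.single_eq_single_iff]

@[simp]
lemma coeff_linear_X_one (α β : K) :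
    coeff (Finsupp.single 1 1) (C α * X 0 + C β * X 1 : MvPolynomial (Fin 2) K) = β := by
  simp [coeff_X, Finsupp.single_eq_single_iff]

lemma linear_eq_linear_iff {α β α' β' : K} :
    (C α * X 0 + C β * X 1 : MvPolynomial (Fin 2) K) = C α' * X 0 + C β' * X 1 ↔
      α = α' ∧ β = β' := by
  refine ⟨fun h => ⟨?_, ?_⟩, fun ⟨h₀, h₁⟩ => h₀ ▸ h₁ ▸ rfl⟩
  · simpa using congrArg (coeff (Finsupp.single 0 1)) h
  · simpa using congrArg (coeff (Finsupp.single 1 1)) h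

lemma linear_eq_X_zero {α β : K} (hα : α = 1) (hβ : β = 0) :
    (C α * X 0 + C β * X 1 : MvPolynomial (Fin 2) K) = X 0 := by
  simp [hα, hβ]

lemma linear_eq_X_one {α β : K} (hα : α = 0) (hβ : β = 1) :
    (C α * X 0 + C β * X 1 : MvPolynomial (Fin 2) K) = X 1 := by
  simp [hα, hβ]

lemma map_linear {F : Type*} [FunLike F (MvPolynomial (Fin 2) K) (MvPolynomial (Fin 2) K)]
    [AlgHomClass F K (MvPolynomial (Fin 2) K) (MvPolynomial (Fin 2) K)] (φ : F) {α β γ δ : K}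
    (h₀ : φ (X 0) = C α * X 0 + C β * X 1) (h₁ : φ (X 1) = C γ * X 0 + C δ * X 1) (s t : K) :
    φ (C s * X 0 + C t * X 1) = C (s * α + t * γ) * X 0 + C (s * β + t * δ) * X 1 := by
  simp only [map_add, map_mul, h₀, h₁, algHomClass_apply_C]
  ring

lemma aeval_linear (α β γ δ s t : K) :
    aeval ![(C α * X 0 + C β * X 1 : MvPolynomial (Fin 2) K), C γ * X 0 + C δ * X 1]
        (C s * X 0 + C t * X 1) =
      C (s * α + t * γ) * X 0 + C (s * β + t * δ) * X 1 :=
  map_linear _ (aeval_X _ 0) (aeval_X _ 1) s t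

lemma exists_linear_of_isHomogeneous_one {p : MvPolynomial (Fin 2) K}
    (hp : p.IsHomogeneous 1) : ∃ α β : K, p = C α * X 0 + C β * X 1 := by
  have hp' : p ∈ Submodule.span K (Set.range X) := by
    rw [← homogeneousSubmodule_one_eq_span_X]
    exact hp
  obtain ⟨f, rfl⟩ := (Submodule.mem_span_range_iff_exists_fun K).1 hp'
  exact ⟨f 0, f 1, by simp [Fin.sum_univ_two, smul_eq_C_mul]⟩

lemma IsLinearAut.exists_linear {φ : MvPolynomial (Fin 2) K ≃ₐ[K] MvPolynomial (Fin 2) K}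
    (h : IsLinearAut φ) : ∃ α β γ δ : K,
      φ (X 0) = C α * X 0 + C β * X 1 ∧ φ (X 1) = C γ * X 0 + C δ * X 1 := by
  obtain ⟨α, β, h₀⟩ := exists_linear_of_isHomogeneous_one h.1
  obtain ⟨γ, δ, h₁⟩ := exists_linear_of_isHomogeneous_one h.2
  exact ⟨α, β, γ, δ, h₀, h₁⟩

lemma det_ne_zero_of_apply_X [Nontrivial K]
    {φ : MvPolynomial (Fin 2) K ≃ₐ[K] MvPolynomial (Fin 2) K} {α β γ δ : K}
    (h₀ : φ (X 0) = C α * X 0 + C β * X 1) (h₁ : φ (X 1) = C γ * X 0 + C δ * X 1) :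
    α * δ - β * γ ≠ 0 := by
  intro hdet
  have hker : ∀ s t : K, s * α + t * γ = 0 → s * β + t * δ = 0 → s = 0 ∧ t = 0 := by
    intro s t hs ht
    refine linear_eq_linear_iff.1 (φ.injective ?_)
    rw [map_linear φ h₀ h₁, map_linear φ h₀ h₁, hs, ht]
    simp
  obtain ⟨rfl, hβ⟩ := hker δ (-β) (by linear_combination hdet) (by ring)
  obtain ⟨hγ, rfl⟩ := hker (-γ) α (by ring) (by linear_combination hdet)
  rw [neg_eq_zero] at hβ hγ
  subst hβ hγ
  exact X_ne_zero (R := K) 0 (φ.injective (by simp [h₀]))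

end LinearForms

section Grading

variable [CommRing K] {a b c : ℕ} {p q : MvPolynomial (Fin 2) K} {d e : ZMod c}

lemma isModHom_zero : IsModHom a b c (0 : MvPolynomial (Fin 2) K) d := by
  simp [IsModHom]

lemma IsModHom.add (hp : IsModHom a b c p d) (hq : IsModHom a b c q d) :
    IsModHom a b c (p + q) d := fun m hm =>
  (Finset.mem_union.1 (support_add hm)).elim (hp m) (hq m)

lemma IsModHom.sub (hp : IsModHom a b c p d) (hq : IsModHom a b c q d) :
    IsModHom a b c (p - q) d := by
  classical
  exact fun m hm => (Finset.mem_union.1 (support_sub _ p q hm)).elim (hp m) (hq m)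

lemma isModHom_sum {ι : Type*} {s : Finset ι} {f : ι → MvPolynomial (Fin 2) K}
    (h : ∀ i ∈ s, IsModHom a b c (f i) d) : IsModHom a b c (∑ i ∈ s, f i) d := by
  classical
  induction s using Finset.induction with
  | empty => exact isModHom_zero
  | insert i s hi ih =>
    rw [Finset.sum_insert hi]
    exact (h i (s.mem_insert_self i)).add (ih fun j hj => h j (Finset.mem_insert_of_mem hj))

lemma IsModHom.mul (hp : IsModHom a b c p d) (hq : IsModHom a b c q e) :
    IsModHom a b c (p * q) (d + e) := by
  classical
  intro m hm
  obtain ⟨m₁, hm₁, m₂, hm₂, rfl⟩ := Finset.mem_add.1 (support_mul p q hm)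
  rw [← hp m₁ hm₁, ← hq m₂ hm₂]
  push_cast [Finsupp.add_apply]
  ring

lemma isModHom_C (r : K) : IsModHom a b c (C r : MvPolynomial (Fin 2) K) 0 := by
  classical
  intro m hm
  rw [C_apply] at hm
  rw [Finset.mem_singleton.1 (support_monomial_subset hm)]
  simp

lemma IsModHom.C_mul (hp : IsModHom a b c p d) (r : K) : IsModHom a b c (C r * p) d := by
  simpa using (isModHom_C r).mul hp

lemma IsModHom.pow (hp : IsModHom a b c p d) (n : ℕ) : IsModHom a b c (p ^ n) (n * d) := by
  induction n with
  | zero => simpa using isModHom_C (1 : K)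
  | succ n ih => simpa [pow_succ, add_mul] using ih.mul hp

lemma isModHom_X_zero : IsModHom a b c (X 0 : MvPolynomial (Fin 2) K) a := by
  classical
  intro m hm
  rw [Finset.mem_singleton.1 (support_monomial_subset hm)]
  simp

lemma isModHom_X_one : IsModHom a b c (X 1 : MvPolynomial (Fin 2) K) b := by
  classical
  intro m hm
  rw [Finset.mem_singleton.1 (support_monomial_subset hm)]
  simp

lemma isModHom_linear_iff {α β : K} :
    IsModHom a b c (C α * X 0 + C β * X 1 : MvPolynomial (Fin 2) K) d ↔
      (α ≠ 0 → (a : ZMod c) = d) ∧ (β ≠ 0 → (b : ZMod c) = d) := by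
  refine ⟨fun h => ⟨fun hα => ?_, fun hβ => ?_⟩, fun ⟨h₀, h₁⟩ => .add ?_ ?_⟩
  · simpa using h _ (mem_support_iff.2 ((coeff_linear_X_zero α β).trans_ne hα))
  · simpa using h _ (mem_support_iff.2 ((coeff_linear_X_one α β).trans_ne hβ))
  · rcases eq_or_ne α 0 with rfl | hα
    · simpa using isModHom_zero
    · exact h₀ hα ▸ isModHom_X_zero.C_mul α
  · rcases eq_or_ne β 0 with rfl | hβ
    · simpa using isModHom_zero
    · exact h₁ hβ ▸ isModHom_X_one.C_mul β

lemma isModGraded_iff {φ : MvPolynomial (Fin 2) K ≃ₐ[K] MvPolynomial (Fin 2) K} :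
    IsModGraded a b c φ ↔ IsModHom a b c (φ (X 0)) a ∧ IsModHom a b c (φ (X 1)) b := by
  refine ⟨fun h => ⟨h _ _ isModHom_X_zero, h _ _ isModHom_X_one⟩, fun ⟨h₀, h₁⟩ d p hp => ?_⟩
  rw [← support_sum_monomial_coeff p, map_sum]
  refine isModHom_sum fun m hm => ?_
  rw [monomial_eq, Finsupp.prod_fintype _ _ (by simp), Fin.prod_univ_two, ← mul_assoc, map_mul,
    map_mul, map_pow, map_pow, algHomClass_apply_C, mul_assoc, ← hp m hm]
  exact ((h₀.pow _).mul (h₁.pow _)).C_mul _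

lemma isModGraded_iff_of_linear {φ : MvPolynomial (Fin 2) K ≃ₐ[K] MvPolynomial (Fin 2) K}
    {α β γ δ : K} (h₀ : φ (X 0) = C α * X 0 + C β * X 1)
    (h₁ : φ (X 1) = C γ * X 0 + C δ * X 1) :
    IsModGraded a b c φ ↔ (β ≠ 0 → (a : ZMod c) = b) ∧ (γ ≠ 0 → (a : ZMod c) = b) := by
  rw [isModGraded_iff, h₀, h₁, isModHom_linear_iff, isModHom_linear_iff]
  grind

lemma IsModGraded.mul {φ ψ : MvPolynomial (Fin 2) K ≃ₐ[K] MvPolynomial (Fin 2) K}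
    (hφ : IsModGraded a b c φ) (hψ : IsModGraded a b c ψ) : IsModGraded a b c (φ * ψ) :=
  fun d p hp => hφ d _ (hψ d p hp)

end Grading

section Automorphisms

variable [CommRing K] {a b c : ℕ}

noncomputable def shearAut (F : Polynomial K) :
    MvPolynomial (Fin 2) K ≃ₐ[K] MvPolynomial (Fin 2) K :=
  aevalEquiv ![X 0 + Polynomial.aeval (X 1) F, X 1] ![X 0 - Polynomial.aeval (X 1) F, X 1]
    (by simp [Fin.forall_fin_two, ← Polynomial.aeval_algHom_apply])
    (by simp [Fin.forall_fin_two, ← Polynomial.aeval_algHom_apply])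

@[simp]
lemma shearAut_X_zero (F : Polynomial K) :
    shearAut F (X 0) = X 0 + Polynomial.aeval (X 1) F :=
  aevalEquiv_X ..

@[simp]
lemma shearAut_X_one (F : Polynomial K) : shearAut F (X 1) = X 1 :=
  aevalEquiv_X ..

lemma isElementary_shearAut [Nontrivial K] (F : Polynomial K) : IsElementary (shearAut F) :=
  .inr ⟨1, one_ne_zero, F, shearAut_X_one F, by simp⟩

noncomputable def swapAut : MvPolynomial (Fin 2) K ≃ₐ[K] MvPolynomial (Fin 2) K :=
  renameEquiv K (Equiv.swap 0 1)

@[simp]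
lemma swapAut_X_zero : swapAut (X 0 : MvPolynomial (Fin 2) K) = X 1 := by
  simp [swapAut]

@[simp]
lemma swapAut_X_one : swapAut (X 1 : MvPolynomial (Fin 2) K) = X 0 := by
  simp [swapAut]

@[simp]
lemma swapAut_mul_swapAut : (swapAut : MvPolynomial (Fin 2) K ≃ₐ[K] _) * swapAut = 1 :=
  algEquiv_ext <| Fin.forall_fin_two.2 ⟨by simp, by simp⟩

lemma IsLinearAut.mul_swapAut {φ : MvPolynomial (Fin 2) K ≃ₐ[K] MvPolynomial (Fin 2) K}
    (h : IsLinearAut φ) : IsLinearAut (φ * swapAut) :=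
  ⟨by simpa using h.2, by simpa using h.1⟩

lemma isModGraded_swapAut (hab : (a : ZMod c) = b) :
    IsModGraded a b c (swapAut : MvPolynomial (Fin 2) K ≃ₐ[K] _) := by
  rw [isModGraded_iff, swapAut_X_zero, swapAut_X_one, hab]
  exact ⟨isModHom_X_one, hab ▸ isModHom_X_zero⟩

lemma IsElementary.swapAut_conj {φ : MvPolynomial (Fin 2) K ≃ₐ[K] MvPolynomial (Fin 2) K}
    (h : IsElementary φ) : IsElementary (swapAut * φ * swapAut) := by
  rcases h with ⟨l, hl, F, h₀, h₁⟩ | ⟨l, hl, F, h₁, h₀⟩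
  · exact .inr ⟨l, hl, F, by simp [h₀], by simp [h₁, ← Polynomial.aeval_algHom_apply]⟩
  · exact .inl ⟨l, hl, F, by simp [h₁], by simp [h₀, ← Polynomial.aeval_algHom_apply]⟩

end Automorphisms

section LinearAut

variable [Field K]

noncomputable def linearAut (α β γ δ : K) (h : α * δ - β * γ ≠ 0) :
    MvPolynomial (Fin 2) K ≃ₐ[K] MvPolynomial (Fin 2) K :=
  aevalEquiv ![C α * X 0 + C β * X 1, C γ * X 0 + C δ * X 1]
    ![C (δ / (α * δ - β * γ)) * X 0 + C (-β / (α * δ - β * γ)) * X 1,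
      C (-γ / (α * δ - β * γ)) * X 0 + C (α / (α * δ - β * γ)) * X 1]
    (Fin.forall_fin_two.2 ⟨by
      rw [Matrix.cons_val_zero, aeval_linear]
      exact linear_eq_X_zero (by linear_combination mul_inv_cancel₀ h) (by ring), by
      rw [Matrix.cons_val_one, Matrix.cons_val_zero, aeval_linear]
      exact linear_eq_X_one (by ring) (by linear_combination mul_inv_cancel₀ h)⟩)
    (Fin.forall_fin_two.2 ⟨by
      rw [Matrix.cons_val_zero, aeval_linear]
      exact linear_eq_X_zero (by linear_combination mul_inv_cancel₀ h) (by ring), by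
      rw [Matrix.cons_val_one, Matrix.cons_val_zero, aeval_linear]
      exact linear_eq_X_one (by ring) (by linear_combination mul_inv_cancel₀ h)⟩)

@[simp]
lemma linearAut_X_zero (α β γ δ : K) (h) :
    linearAut α β γ δ h (X 0) = C α * X 0 + C β * X 1 :=
  aevalEquiv_X ..

@[simp]
lemma linearAut_X_one (α β γ δ : K) (h) :
    linearAut α β γ δ h (X 1) = C γ * X 0 + C δ * X 1 :=
  aevalEquiv_X ..

lemma isLinearAut_linearAut (α β γ δ : K) (h) : IsLinearAut (linearAut α β γ δ h) := by
  constructor <;> simp only [linearAut_X_zero, linearAut_X_one] <;>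
    exact (isHomogeneous_C_mul_X _ 0).add (isHomogeneous_C_mul_X _ 1)

end LinearAut

section Factorization

variable [Field K] {a b c : ℕ}

def HasGradedFactorization (a b c : ℕ)
    (φ : MvPolynomial (Fin 2) K ≃ₐ[K] MvPolynomial (Fin 2) K) : Prop :=
  ∃ ζ₀ ζ₁ ζ₂ : MvPolynomial (Fin 2) K ≃ₐ[K] MvPolynomial (Fin 2) K,
    IsLinearAut ζ₀ ∧ IsModGraded a b c ζ₀ ∧
    IsElementary ζ₁ ∧ IsModGraded a b c ζ₁ ∧
    IsLinearAut ζ₂ ∧ IsModGraded a b c ζ₂ ∧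
    φ = ζ₂ * ζ₁ * ζ₀ ∧
    ∃ l : K, l ≠ 0 ∧ ζ₂ (X 0) = C l * X 0

lemma hasGradedFactorization_mul_of_apply_X_zero
    {ζ₁ ζ₂ : MvPolynomial (Fin 2) K ≃ₐ[K] MvPolynomial (Fin 2) K}
    (h₁ : IsElementary ζ₁) (h₁g : IsModGraded a b c ζ₁) (h₂ : IsLinearAut ζ₂)
    (h₂g : IsModGraded a b c ζ₂) {l : K} (hl : ζ₂ (X 0) = C l * X 0) :
    HasGradedFactorization a b c (ζ₂ * ζ₁) := by
  have hl₀ : l ≠ 0 := by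
    rintro rfl
    exact X_ne_zero (R := K) 0 (ζ₂.injective (by simp [hl]))
  exact ⟨1, ζ₁, ζ₂, ⟨isHomogeneous_X K 0, isHomogeneous_X K 1⟩, fun _ _ => id, h₁, h₁g, h₂,
    h₂g, (mul_one _).symm, l, hl₀, hl⟩

lemma hasGradedFactorization_mul_of_fixes_X_one
    {ξ₁ ξ₂ : MvPolynomial (Fin 2) K ≃ₐ[K] MvPolynomial (Fin 2) K} {α β γ δ l : K}
    {F : Polynomial K} (hA : ξ₂ (X 0) = C α * X 0 + C β * X 1)
    (hB : ξ₂ (X 1) = C γ * X 0 + C δ * X 1) (h₂g : IsModGraded a b c ξ₂) (hδ : δ ≠ 0)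
    (hl : l ≠ 0) (h₀ : ξ₁ (X 0) = C l * X 0 + Polynomial.aeval (X 1) F) (h₁ : ξ₁ (X 1) = X 1)
    (h₁g : IsModGraded a b c ξ₁) :
    HasGradedFactorization a b c (ξ₂ * ξ₁) := by
  have hdet := det_ne_zero_of_apply_X hA hB
  obtain ⟨hβ, hγ⟩ := (isModGraded_iff_of_linear hA hB).1 h₂g
  have hF : IsModHom a b c (Polynomial.aeval (X 1) F : MvPolynomial (Fin 2) K) a := by
    simpa [h₀] using (isModGraded_iff.1 h₁g).1.sub (isModHom_X_zero.C_mul l)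
  set t := l * β / δ
  set m := l * (α * δ - β * γ) / δ
  have hm : m ≠ 0 := div_ne_zero (mul_ne_zero hl hdet) hδ
  refine ⟨linearAut 1 t 0 1 (by simp), shearAut F, linearAut m 0 γ δ (by simp [hm, hδ]),
    isLinearAut_linearAut .., ?_, isElementary_shearAut F, ?_, isLinearAut_linearAut .., ?_,
    algEquiv_ext (Fin.forall_fin_two.2 ⟨?_, ?_⟩), m, hm, by simp⟩
  · rw [isModGraded_iff_of_linear (linearAut_X_zero ..) (linearAut_X_one ..)]
    refine ⟨fun ht => hβ fun hβ₀ => ht ?_, by simp⟩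
    simp [t, hβ₀]
  · rw [isModGraded_iff, shearAut_X_zero, shearAut_X_one]
    exact ⟨isModHom_X_zero.add hF, isModHom_X_one⟩
  · rw [isModGraded_iff_of_linear (linearAut_X_zero ..) (linearAut_X_one ..)]
    exact ⟨by simp, hγ⟩
  · have ht : l * β = t * δ := (div_mul_cancel₀ _ hδ).symm
    have hm' : l * α = m + t * γ := by simp only [m, t]; field_simp; ring
    simp only [AlgEquiv.mul_apply, h₀, hA, hB, map_add, map_mul, algHomClass_apply_C,
      ← Polynomial.aeval_algHom_apply, linearAut_X_zero, linearAut_X_one, shearAut_X_zero,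
      shearAut_X_one, C_0, C_1, one_mul, zero_mul, add_zero]
    simp only [C_mul']
    linear_combination (norm := module) hm' • X 0 + ht • X 1
  · simp [h₁, hB]

lemma HasGradedFactorization.of_swapAut_conj (hab : (a : ZMod c) = b)
    {φ ψ : MvPolynomial (Fin 2) K ≃ₐ[K] MvPolynomial (Fin 2) K}
    (h : HasGradedFactorization a b c (φ * swapAut * (swapAut * ψ * swapAut))) :
    HasGradedFactorization a b c (φ * ψ) := by
  obtain ⟨ζ₀, ζ₁, ζ₂, h₀, h₀g, h₁, h₁g, h₂, h₂g, heq, hl⟩ := h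
  refine ⟨ζ₀ * swapAut, ζ₁, ζ₂, h₀.mul_swapAut, h₀g.mul (isModGraded_swapAut hab), h₁, h₁g, h₂,
    h₂g, ?_, hl⟩
  rw [← mul_assoc, ← heq]
  simp only [mul_assoc, swapAut_mul_swapAut, mul_one]
  rw [← mul_assoc swapAut, swapAut_mul_swapAut, one_mul]

end Factorization

theorem linear_after_elementary_general [Field K]
    (a b c : ℕ)
    (ξ₁ ξ₂ : MvPolynomial (Fin 2) K ≃ₐ[K] MvPolynomial (Fin 2) K)
    (h1e : IsElementary ξ₁) (h1g : IsModGraded a b c ξ₁)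
    (h2l : IsLinearAut ξ₂) (h2g : IsModGraded a b c ξ₂) :
    ∃ ζ₀ ζ₁ ζ₂ : MvPolynomial (Fin 2) K ≃ₐ[K] MvPolynomial (Fin 2) K,
      IsLinearAut ζ₀ ∧ IsModGraded a b c ζ₀ ∧
      IsElementary ζ₁ ∧ IsModGraded a b c ζ₁ ∧
      IsLinearAut ζ₂ ∧ IsModGraded a b c ζ₂ ∧
      ξ₂ * ξ₁ = ζ₂ * ζ₁ * ζ₀ ∧
      ∃ l : K, l ≠ 0 ∧ ζ₂ (X 0) = C l * X 0 := by
  show HasGradedFactorization a b c (ξ₂ * ξ₁)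
  obtain ⟨α, β, γ, δ, hA, hB⟩ := h2l.exists_linear
  have hdet := det_ne_zero_of_apply_X hA hB
  obtain ⟨hβ, -⟩ := (isModGraded_iff_of_linear hA hB).1 h2g
  rcases h1e with ⟨l, hl, F, hX0, hX1⟩ | ⟨l, hl, F, hX1, hX0⟩
  · by_cases hβ₀ : β = 0
    · exact hasGradedFactorization_mul_of_apply_X_zero (.inl ⟨l, hl, F, hX0, hX1⟩) h1g h2l h2g
        (l := α) (by simp [hA, hβ₀])
    · have hσ := isModGraded_swapAut (K := K) (hβ hβ₀)
      refine .of_swapAut_conj (hβ hβ₀) (hasGradedFactorization_mul_of_fixes_X_one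
        (by simpa using hB) (by simpa using hA) (h2g.mul hσ) hβ₀ hl (F := F)
        (by simp [hX1, ← Polynomial.aeval_algHom_apply]) (by simp [hX0]) ((hσ.mul h1g).mul hσ))
  · by_cases hδ : δ = 0
    · have hβ₀ : β ≠ 0 := by rintro rfl; simp [hδ] at hdet
      have hσ := isModGraded_swapAut (K := K) (hβ hβ₀)
      exact .of_swapAut_conj (hβ hβ₀) (hasGradedFactorization_mul_of_apply_X_zero
        (IsElementary.swapAut_conj (.inr ⟨l, hl, F, hX1, hX0⟩)) ((hσ.mul h1g).mul hσ)
        h2l.mul_swapAut (h2g.mul hσ) (l := γ) (by simp [hB, hδ]))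
    · exact hasGradedFactorization_mul_of_fixes_X_one hA hB h2g hδ hl hX0 hX1 h1g

/-- if `ξ₁` is elementary graded and `ξ₂` is linear graded, then
`ξ₂∘ξ₁ = ζ₂∘ζ₁∘ζ₀` with `ζ₀, ζ₂` linear graded, `ζ₁` elementary graded and
`ζ₂(u) = λu`, `λ ≠ 0`. -/
theorem linear_after_elementary [Field K] [IsAlgClosed K] [CharZero K]
    (a b c : ℕ)
    (ξ₁ ξ₂ : MvPolynomial (Fin 2) K ≃ₐ[K] MvPolynomial (Fin 2) K)
    (h1e : IsElementary ξ₁) (h1g : IsModGraded a b c ξ₁)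
    (h2l : IsLinearAut ξ₂) (h2g : IsModGraded a b c ξ₂) :
    ∃ ζ₀ ζ₁ ζ₂ : MvPolynomial (Fin 2) K ≃ₐ[K] MvPolynomial (Fin 2) K,
      IsLinearAut ζ₀ ∧ IsModGraded a b c ζ₀ ∧
      IsElementary ζ₁ ∧ IsModGraded a b c ζ₁ ∧
      IsLinearAut ζ₂ ∧ IsModGraded a b c ζ₂ ∧
      ξ₂ * ξ₁ = ζ₂ * ζ₁ * ζ₀ ∧
      ∃ l : K, l ≠ 0 ∧ ζ₂ (X 0) = C l * X 0 :=
  linear_after_elementary_general a b c ξ₁ ξ₂ h1e h1g h2l h2g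
end
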